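/- Let h : D → ℂ be holomorphic on the open unit disc, continuous on the closed disc, real-valued on [-1,1], with h(ζ) = a·ζ^k + o(ζ^k) for some real a ≠ 0 and integer k ≥ 2. Extend h to the disc by reflection. Then any function h̃ holomorphic on the upper half-disc, continuous up to the boundary, real on [-1,1], sufficiently uniformly close to h on the closed upper half-disc, has at least one zero in the closed upper half-disc. -/

import Mathlib

open Complex Metric Filter Asymptotics Set intervalIntegral MeasureTheory


/-- Norm bound on a closed rectangle from its four corners. -/
lemma norm_le_of_rect {r x₁ x₂ y₁ y₂ : ℝ}
    (h₁ : ‖(x₁ : ℂ) + y₁ * I‖ ≤ r) (h₂ : ‖(x₂ : ℂ) + y₁ * I‖ ≤ r)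
    (h₃ : ‖(x₁ : ℂ) + y₂ * I‖ ≤ r) (h₄ : ‖(x₂ : ℂ) + y₂ * I‖ ≤ r)
    {z : ℂ} (hre : z.re ∈ uIcc x₁ x₂) (him : z.im ∈ uIcc y₁ y₂) : ‖z‖ ≤ r := by
  have hsq : ∀ (x y : ℝ), ‖(x : ℂ) + y * I‖ ^ 2 = x ^ 2 + y ^ 2 := by
    intro x y
    rw [Complex.sq_norm, normSq_apply]
    simp [pow_two]
  have hzsq : ‖z‖ ^ 2 = z.re ^ 2 + z.im ^ 2 := by
    rw [Complex.sq_norm, normSq_apply]; ring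
  have habs : ∀ (u v w : ℝ), u ∈ uIcc v w → u ^ 2 ≤ v ^ 2 ∨ u ^ 2 ≤ w ^ 2 := by
    intro u v w hu
    rw [mem_uIcc] at hu
    have h : |u| ≤ max |v| |w| := by
      rcases hu with ⟨hl, hr⟩ | ⟨hl, hr⟩
      · exact abs_le_max_abs_abs hl hr
      · exact (abs_le_max_abs_abs hl hr).trans (by rw [max_comm])
    rcases le_max_iff.mp h with h | h
    · left
      calc u ^ 2 = |u| ^ 2 := (_root_.sq_abs u).symm
        _ ≤ |v| ^ 2 := pow_le_pow_left₀ (abs_nonneg u) h 2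
        _ = v ^ 2 := _root_.sq_abs v
    · right
      calc u ^ 2 = |u| ^ 2 := (_root_.sq_abs u).symm
        _ ≤ |w| ^ 2 := pow_le_pow_left₀ (abs_nonneg u) h 2
        _ = w ^ 2 := _root_.sq_abs w
  have hr0 : 0 ≤ r := (norm_nonneg _).trans h₁
  refine le_of_pow_le_pow_left₀ two_ne_zero hr0 ?_
  have c11 : x₁ ^ 2 + y₁ ^ 2 ≤ r ^ 2 := by
    rw [← hsq x₁ y₁]; exact pow_le_pow_left₀ (norm_nonneg _) h₁ 2
  have c21 : x₂ ^ 2 + y₁ ^ 2 ≤ r ^ 2 := by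
    rw [← hsq x₂ y₁]; exact pow_le_pow_left₀ (norm_nonneg _) h₂ 2
  have c12 : x₁ ^ 2 + y₂ ^ 2 ≤ r ^ 2 := by
    rw [← hsq x₁ y₂]; exact pow_le_pow_left₀ (norm_nonneg _) h₃ 2
  have c22 : x₂ ^ 2 + y₂ ^ 2 ≤ r ^ 2 := by
    rw [← hsq x₂ y₂]; exact pow_le_pow_left₀ (norm_nonneg _) h₄ 2
  rw [hzsq]
  rcases habs z.re x₁ x₂ hre with h | h <;> rcases habs z.im y₁ y₂ him with h' | h' <;> linarith


/-- If `g` is complex differentiable at `conj z₀`, then `z ↦ conj (g (conj z))` is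
complex differentiable at `z₀`. -/
lemma differentiableAt_conj_reflect {g : ℂ → ℂ} {z₀ : ℂ}
    (hg : DifferentiableAt ℂ g ((starRingEnd ℂ) z₀)) :
    DifferentiableAt ℂ (fun z => (starRingEnd ℂ) (g ((starRingEnd ℂ) z))) z₀ := by
  set c := deriv g ((starRingEnd ℂ) z₀) with hc
  have hD := hasDerivAt_iff_isLittleO.mp hg.hasDerivAt
  have htc : Tendsto (fun z : ℂ => (starRingEnd ℂ) z) (nhds z₀) (nhds ((starRingEnd ℂ) z₀)) :=
    (continuous_conj.tendsto z₀)
  have H := hD.comp_tendsto htc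
  refine HasDerivAt.differentiableAt (f' := (starRingEnd ℂ) c) ?_
  rw [hasDerivAt_iff_isLittleO]
  rw [← isLittleO_norm_norm] at H ⊢
  have e1 : (fun z : ℂ => ‖g ((starRingEnd ℂ) z) - g ((starRingEnd ℂ) z₀) -
      ((starRingEnd ℂ) z - (starRingEnd ℂ) z₀) • c‖) =
      fun z : ℂ => ‖(starRingEnd ℂ) (g ((starRingEnd ℂ) z)) -
        (starRingEnd ℂ) (g ((starRingEnd ℂ) z₀)) - (z - z₀) • (starRingEnd ℂ) c‖ := by
    funext z
    rw [show (starRingEnd ℂ) (g ((starRingEnd ℂ) z)) - (starRingEnd ℂ) (g ((starRingEnd ℂ) z₀))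
        - (z - z₀) • (starRingEnd ℂ) c =
        (starRingEnd ℂ) (g ((starRingEnd ℂ) z) - g ((starRingEnd ℂ) z₀) -
          ((starRingEnd ℂ) z - (starRingEnd ℂ) z₀) • c) by
      simp [smul_eq_mul, map_sub, map_mul]]
    rw [RCLike.norm_conj]
  have e2 : (fun z : ℂ => ‖(starRingEnd ℂ) z - (starRingEnd ℂ) z₀‖) =
      fun z : ℂ => ‖z - z₀‖ := by
    funext z
    rw [← map_sub, RCLike.norm_conj]
  simp only [Function.comp] at H
  rw [← hc] at H
  rw [e1, e2] at H
  exact H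


/-- Cauchy–Goursat for a rectangle, allowing non-differentiability on the real axis. -/
lemma rect_integral_zero_off_real {f : ℂ → ℂ} (x₁ x₂ y₁ y₂ : ℝ)
    (Hc : ContinuousOn f (uIcc x₁ x₂ ×ℂ uIcc y₁ y₂))
    (Hd : ∀ z : ℂ, z ∈ Ioo (min x₁ x₂) (max x₁ x₂) ×ℂ Ioo (min y₁ y₂) (max y₁ y₂) →
      z.im ≠ 0 → DifferentiableAt ℂ f z) :
    (∫ t in x₁..x₂, f (t + y₁ * I)) - (∫ t in x₁..x₂, f (t + y₂ * I)) +
      I • (∫ s in y₁..y₂, f (x₂ + s * I)) - I • ∫ s in y₁..y₂, f (x₁ + s * I) = 0 := by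
  have base : ∀ (v₁ v₂ : ℝ), ContinuousOn f (uIcc x₁ x₂ ×ℂ uIcc v₁ v₂) →
      0 ∉ Ioo (min v₁ v₂) (max v₁ v₂) →
      (∀ z : ℂ, z ∈ Ioo (min x₁ x₂) (max x₁ x₂) ×ℂ Ioo (min v₁ v₂) (max v₁ v₂) →
        DifferentiableAt ℂ f z) →
      (∫ t in x₁..x₂, f (t + v₁ * I)) - (∫ t in x₁..x₂, f (t + v₂ * I)) +
        I • (∫ s in v₁..v₂, f (x₂ + s * I)) - I • ∫ s in v₁..v₂, f (x₁ + s * I) = 0 := by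
    intro v₁ v₂ hcont _h0 hdiff
    have key := Complex.integral_boundary_rect_eq_zero_of_differentiable_on_off_countable f
      ((x₁ : ℂ) + (v₁ : ℝ) * I) ((x₂ : ℂ) + (v₂ : ℝ) * I) ∅ countable_empty ?_ ?_
    · simpa using key
    · simpa using hcont
    · intro z hz
      simp only [diff_empty] at hz
      simp only [Complex.add_re, Complex.ofReal_re, Complex.mul_re, Complex.I_re,
        Complex.ofReal_im, Complex.I_im, Complex.add_im, Complex.mul_im] at hz
      norm_num at hz
      exact hdiff z (by simpa [Complex.mem_reProdIm] using hz)
  by_cases h0 : 0 ∈ Ioo (min y₁ y₂) (max y₁ y₂)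
  · have h0u : (0 : ℝ) ∈ uIcc y₁ y₂ := by
      rw [Set.mem_uIcc]
      rcases le_total y₁ y₂ with h | h
      · left
        constructor
        · have := h0.1; simpa [min_eq_left h] using this.le
        · have := h0.2; simpa [max_eq_right h] using this.le
      · right
        constructor
        · have := h0.1; simpa [min_eq_right h] using this.le
        · have := h0.2; simpa [max_eq_left h] using this.le
    have hsub1 : uIcc y₁ (0:ℝ) ⊆ uIcc y₁ y₂ := uIcc_subset_uIcc left_mem_uIcc h0u
    have hsub2 : uIcc (0:ℝ) y₂ ⊆ uIcc y₁ y₂ := uIcc_subset_uIcc h0u right_mem_uIcc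
    have hIoo1 : Ioo (min y₁ 0) (max y₁ 0) ⊆ Ioo (min y₁ y₂) (max y₁ y₂) :=
      Ioo_subset_Ioo (le_min (min_le_left _ _) h0.1.le) (max_le (le_max_left _ _) h0.2.le)
    have hIoo2 : Ioo (min 0 y₂) (max 0 y₂) ⊆ Ioo (min y₁ y₂) (max y₁ y₂) :=
      Ioo_subset_Ioo (le_min h0.1.le (min_le_right _ _)) (max_le h0.2.le (le_max_right _ _))
    have hno1 : (0 : ℝ) ∉ Ioo (min y₁ 0) (max y₁ 0) := by
      intro hmem
      rcases min_lt_iff.mp hmem.1 with h | h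
      · rcases lt_max_iff.mp hmem.2 with h' | h' <;> linarith
      · exact absurd h (lt_irrefl 0)
    have hno2 : (0 : ℝ) ∉ Ioo (min 0 y₂) (max 0 y₂) := by
      intro hmem
      rcases min_lt_iff.mp hmem.1 with h | h
      · exact absurd h (lt_irrefl 0)
      · rcases lt_max_iff.mp hmem.2 with h' | h' <;> linarith
    have hmono : ∀ (s : Set ℝ), s ⊆ uIcc y₁ y₂ →
        ContinuousOn f (uIcc x₁ x₂ ×ℂ s) := by
      intro s hs
      refine Hc.mono ?_
      intro z hz
      rw [Complex.mem_reProdIm] at hz ⊢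
      exact ⟨hz.1, hs hz.2⟩
    have hd1 : ∀ z : ℂ, z ∈ Ioo (min x₁ x₂) (max x₁ x₂) ×ℂ Ioo (min y₁ 0) (max y₁ 0) →
        DifferentiableAt ℂ f z := by
      intro z hz
      rw [Complex.mem_reProdIm] at hz
      refine Hd z ?_ (fun he => hno1 (he ▸ hz.2))
      rw [Complex.mem_reProdIm]
      exact ⟨hz.1, hIoo1 hz.2⟩
    have hd2 : ∀ z : ℂ, z ∈ Ioo (min x₁ x₂) (max x₁ x₂) ×ℂ Ioo (min 0 y₂) (max 0 y₂) →
        DifferentiableAt ℂ f z := by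
      intro z hz
      rw [Complex.mem_reProdIm] at hz
      refine Hd z ?_ (fun he => hno2 (he ▸ hz.2))
      rw [Complex.mem_reProdIm]
      exact ⟨hz.1, hIoo2 hz.2⟩
    have E₁ := base y₁ 0 (hmono _ hsub1) hno1 hd1
    have E₂ := base 0 y₂ (hmono _ hsub2) hno2 hd2
    have hint : ∀ (u v₁ v₂ : ℝ), u ∈ uIcc x₁ x₂ → uIcc v₁ v₂ ⊆ uIcc y₁ y₂ →
        IntervalIntegrable (fun s : ℝ => f ((u : ℂ) + s * I)) volume v₁ v₂ := by
      intro u v₁ v₂ hu hsub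
      refine ContinuousOn.intervalIntegrable ?_
      refine Hc.comp ?_ ?_
      · exact (by fun_prop : Continuous fun s : ℝ => (u : ℂ) + s * I).continuousOn
      · intro s hs
        rw [Complex.mem_reProdIm]
        constructor
        · simpa using hu
        · simpa using hsub hs
    have he₂ := intervalIntegral.integral_add_adjacent_intervals
      (hint x₂ y₁ 0 right_mem_uIcc hsub1) (hint x₂ 0 y₂ right_mem_uIcc hsub2)
    have he₁ := intervalIntegral.integral_add_adjacent_intervals
      (hint x₁ y₁ 0 left_mem_uIcc hsub1) (hint x₁ 0 y₂ left_mem_uIcc hsub2)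
    simp only [smul_eq_mul] at E₁ E₂ ⊢
    linear_combination E₁ + E₂ - Complex.I * he₂ + Complex.I * he₁
  · exact base y₁ y₂ Hc h0 (fun z hz => by
      rw [Complex.mem_reProdIm] at hz
      exact Hd z (by rw [Complex.mem_reProdIm]; exact hz) (fun he => h0 (he ▸ hz.2)))

/-- Morera-type theorem: continuous on the closed disc, holomorphic off the real axis,
implies holomorphic on the open disc. -/
lemma differentiableOn_of_off_real {f : ℂ → ℂ} {r : ℝ}
    (Hc : ContinuousOn f (closedBall (0 : ℂ) r))
    (Hd : ∀ z : ℂ, ‖z‖ < r → z.im ≠ 0 → DifferentiableAt ℂ f z) :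
    DifferentiableOn ℂ f (ball (0 : ℂ) r) := by
  set F : ℂ → ℂ := fun w =>
    (∫ t in (0:ℝ)..w.re, f t) + I * ∫ s in (0:ℝ)..w.im, f (w.re + s * I) with hF
  -- integrability helpers
  have hH : ∀ a b y : ℝ, ‖(a : ℂ) + y * I‖ ≤ r → ‖(b : ℂ) + y * I‖ ≤ r →
      IntervalIntegrable (fun t : ℝ => f (t + y * I)) volume a b := by
    intro a b y h1 h2
    refine (Hc.comp ((by fun_prop : Continuous fun t : ℝ => (t : ℂ) + y * I).continuousOn)
      ?_).intervalIntegrable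
    intro t ht
    rw [mem_closedBall_zero_iff]
    refine norm_le_of_rect h1 h2 h1 h2 (z := (t : ℂ) + y * I) ?_ ?_ <;> simp [ht]
  have hV : ∀ x a b : ℝ, ‖(x : ℂ) + a * I‖ ≤ r → ‖(x : ℂ) + b * I‖ ≤ r →
      IntervalIntegrable (fun s : ℝ => f (x + s * I)) volume a b := by
    intro x a b h1 h2
    refine (Hc.comp ((by fun_prop : Continuous fun s : ℝ => (x : ℂ) + s * I).continuousOn)
      ?_).intervalIntegrable
    intro t ht
    rw [mem_closedBall_zero_iff]
    refine norm_le_of_rect h1 h1 h2 h2 (z := (x : ℂ) + t * I) ?_ ?_ <;> simp [ht]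
  have key : ∀ w₀ ∈ ball (0 : ℂ) r, HasDerivAt F (f w₀) w₀ := by
    intro w₀ hw₀
    rw [mem_ball_zero_iff] at hw₀
    set ρ : ℝ := r - ‖w₀‖ with hρ
    have hρ0 : 0 < ρ := by simp only [hρ]; linarith
    have habs_re : ∀ u : ℂ, |u.re| ≤ ‖u‖ := fun u => Complex.abs_re_le_norm u
    have habs_im : ∀ u : ℂ, |u.im| ≤ ‖u‖ := fun u => Complex.abs_im_le_norm u
    -- corner estimates for `w` with ‖w - w₀‖ < ρ
    have corners : ∀ w : ℂ, ‖w - w₀‖ < ρ →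
        ‖(w₀.re : ℂ) + (0:ℝ) * I‖ ≤ ‖w₀‖ + ‖w - w₀‖ ∧
        ‖(w.re : ℂ) + (0:ℝ) * I‖ ≤ ‖w₀‖ + ‖w - w₀‖ ∧
        ‖(w₀.re : ℂ) + w₀.im * I‖ ≤ ‖w₀‖ + ‖w - w₀‖ ∧
        ‖(w.re : ℂ) + w₀.im * I‖ ≤ ‖w₀‖ + ‖w - w₀‖ ∧
        ‖(w.re : ℂ) + w.im * I‖ ≤ ‖w₀‖ + ‖w - w₀‖ := by
      intro w hw
      have hn0 : (0 : ℝ) ≤ ‖w - w₀‖ := norm_nonneg _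
      have e1 : ‖(w₀.re : ℂ) + (0:ℝ) * I‖ = |w₀.re| := by
        simp [Complex.norm_real]
      have e2 : ‖(w.re : ℂ) + (0:ℝ) * I‖ = |w.re| := by
        simp [Complex.norm_real]
      have hre : |w.re| ≤ |w₀.re| + |w.re - w₀.re| := by
        have := abs_add_le w₀.re (w.re - w₀.re); simpa using this
      have hrd : |w.re - w₀.re| ≤ ‖w - w₀‖ := by
        have := habs_re (w - w₀); simpa [Complex.sub_re] using this
      have himd : |w.im - w₀.im| ≤ ‖w - w₀‖ := by
        have := habs_im (w - w₀); simpa [Complex.sub_im] using this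
      refine ⟨?_, ?_, ?_, ?_, ?_⟩
      · rw [e1]; exact (habs_re w₀).trans (by linarith)
      · rw [e2]; refine hre.trans ?_
        have := habs_re w₀; linarith
      · rw [Complex.re_add_im]; linarith
      · have heq : (w.re : ℂ) + w₀.im * I = w₀ + ((w.re - w₀.re : ℝ) : ℂ) := by
          apply Complex.ext <;> simp
        rw [heq]
        refine (norm_add_le _ _).trans ?_
        rw [Complex.norm_real, Real.norm_eq_abs]
        linarith
      · rw [Complex.re_add_im]
        have : w = w₀ + (w - w₀) := by ring
        calc ‖w‖ = ‖w₀ + (w - w₀)‖ := by rw [← this]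
          _ ≤ ‖w₀‖ + ‖w - w₀‖ := norm_add_le _ _
    have hid : ∀ w : ℂ, ‖w - w₀‖ < ρ → F w - F w₀ =
        (∫ t in w₀.re..w.re, f (t + w₀.im * I)) +
          I * ∫ s in w₀.im..w.im, f (w.re + s * I) := by
      intro w hw
      obtain ⟨m1, m2, m3, m4, m5⟩ := corners w hw
      have hsr : ‖w₀‖ + ‖w - w₀‖ < r := by simp only [hρ] at hw; linarith
      have m1' := m1.trans hsr.le
      have m2' := m2.trans hsr.le
      have m3' := m3.trans hsr.le
      have m4' := m4.trans hsr.le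
      have m5' := m5.trans hsr.le
      -- rectangle with corners w₀.re, w.re (horizontal) and 0, w₀.im (vertical)
      have E := rect_integral_zero_off_real (f := f) w₀.re w.re 0 w₀.im ?_ ?_
      · have vsplit := intervalIntegral.integral_add_adjacent_intervals
          (hV w.re 0 w₀.im m2' m4') (hV w.re w₀.im w.im m4' m5')
        have h00 : ‖(0 : ℂ) + (0:ℝ) * I‖ ≤ r := by
          simpa using (norm_nonneg w₀).trans hw₀.le
        have hzz : ((0:ℝ) : ℂ) + (0:ℝ) * I = ((0:ℝ) : ℂ) := by simp
        have hint1 : IntervalIntegrable (fun t : ℝ => f ((t : ℂ) + (0:ℝ) * I)) volume 0 w.re := by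
          refine hH 0 w.re 0 (by simpa using h00) m2'
        have hint2 : IntervalIntegrable (fun t : ℝ => f ((t : ℂ) + (0:ℝ) * I)) volume 0 w₀.re := by
          refine hH 0 w₀.re 0 (by simpa using h00) m1'
        have hfun : (fun t : ℝ => f ((t : ℂ) + (0:ℝ) * I)) = fun t : ℝ => f t := by
          funext t; simp
        rw [hfun] at hint1 hint2
        have hsplit1 := intervalIntegral.integral_interval_sub_left hint1 hint2
        simp only [hF]
        simp only [smul_eq_mul, Complex.ofReal_zero, zero_mul, add_zero] at E ⊢
        linear_combination hsplit1 + E - Complex.I * vsplit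
      · -- continuity on the rectangle
        refine Hc.mono ?_
        intro z hz
        rw [Complex.mem_reProdIm] at hz
        rw [mem_closedBall_zero_iff]
        exact norm_le_of_rect m1' m2' m3' m4' hz.1 hz.2
      · -- differentiability off the real axis in the open rectangle
        intro z hz hzim
        rw [Complex.mem_reProdIm] at hz
        refine Hd z ?_ hzim
        have : ‖z‖ ≤ ‖w₀‖ + ‖w - w₀‖ :=
          norm_le_of_rect m1 m2 m3 m4
            (Set.Ioo_subset_Icc_self hz.1) (Set.Ioo_subset_Icc_self hz.2)
        calc ‖z‖ ≤ ‖w₀‖ + ‖w - w₀‖ := this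
          _ < r := hsr
    -- now the derivative estimate
    have hca : ContinuousAt f w₀ := by
      refine Hc.continuousAt ?_
      exact Filter.mem_of_superset (isOpen_ball.mem_nhds (mem_ball_zero_iff.mpr hw₀))
        ball_subset_closedBall
    rw [hasDerivAt_iff_isLittleO, Asymptotics.isLittleO_iff]
    intro c hc
    obtain ⟨σ, hσ0, hσ⟩ := Metric.continuousAt_iff.mp hca (c / 2) (by linarith)
    rw [Metric.eventually_nhds_iff]
    refine ⟨min ρ (σ / 2), by positivity, ?_⟩
    intro w hwd
    rw [dist_eq_norm] at hwd
    have hw1 : ‖w - w₀‖ < ρ := hwd.trans_le (min_le_left _ _)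
    have hw2 : ‖w - w₀‖ < σ / 2 := hwd.trans_le (min_le_right _ _)
    obtain ⟨m1, m2, m3, m4, m5⟩ := corners w hw1
    have hsr : ‖w₀‖ + ‖w - w₀‖ < r := by simp only [hρ] at hw1; linarith
    have hint1 : IntervalIntegrable (fun t : ℝ => f ((t : ℂ) + w₀.im * I)) volume w₀.re w.re :=
      hH w₀.re w.re w₀.im (m3.trans hsr.le) (m4.trans hsr.le)
    have hint2 : IntervalIntegrable (fun s : ℝ => f ((w.re : ℂ) + s * I)) volume w₀.im w.im :=
      hV w.re w₀.im w.im (m4.trans hsr.le) (m5.trans hsr.le)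
    have hrd : |w.re - w₀.re| ≤ ‖w - w₀‖ := by
      have := Complex.abs_re_le_norm (w - w₀); simpa [Complex.sub_re] using this
    have himd : |w.im - w₀.im| ≤ ‖w - w₀‖ := by
      have := Complex.abs_im_le_norm (w - w₀); simpa [Complex.sub_im] using this
    have hfw : F w - F w₀ - (w - w₀) • f w₀ =
        (∫ t in w₀.re..w.re, (f (t + w₀.im * I) - f w₀)) +
          I * ∫ s in w₀.im..w.im, (f (w.re + s * I) - f w₀) := by
      rw [hid w hw1]
      rw [intervalIntegral.integral_sub hint1 intervalIntegrable_const,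
        intervalIntegral.integral_sub hint2 intervalIntegrable_const,
        intervalIntegral.integral_const, intervalIntegral.integral_const]
      have hwdec : w - w₀ = ((w.re - w₀.re : ℝ) : ℂ) + ((w.im - w₀.im : ℝ) : ℂ) * I := by
        apply Complex.ext <;> simp
      rw [smul_eq_mul, hwdec, Complex.real_smul, Complex.real_smul]
      push_cast
      ring
    rw [hfw]
    have hb1 : ‖∫ t in w₀.re..w.re, (f (t + w₀.im * I) - f w₀)‖ ≤ (c/2) * |w.re - w₀.re| := by
      refine intervalIntegral.norm_integral_le_of_norm_le_const ?_
      intro t ht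
      rw [Set.mem_uIoc] at ht
      have htb : |t - w₀.re| ≤ |w.re - w₀.re| := by
        rcases ht with ⟨h1, h2⟩ | ⟨h1, h2⟩ <;>
          · rw [abs_le]
            constructor <;>
              linarith [neg_abs_le (w.re - w₀.re), le_abs_self (w.re - w₀.re),
                abs_nonneg (w.re - w₀.re)]
      have hdist : dist ((t : ℂ) + w₀.im * I) w₀ < σ := by
        rw [dist_eq_norm]
        have heq : (t : ℂ) + w₀.im * I - w₀ = ((t - w₀.re : ℝ) : ℂ) := by
          apply Complex.ext <;> simp
        rw [heq, Complex.norm_real]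
        calc |t - w₀.re| ≤ |w.re - w₀.re| := htb
          _ ≤ ‖w - w₀‖ := hrd
          _ < σ / 2 := hw2
          _ < σ := by linarith
      have := hσ hdist
      rw [dist_eq_norm] at this
      exact this.le
    have hb2 : ‖∫ s in w₀.im..w.im, (f (w.re + s * I) - f w₀)‖ ≤ (c/2) * |w.im - w₀.im| := by
      refine intervalIntegral.norm_integral_le_of_norm_le_const ?_
      intro s hs
      rw [Set.mem_uIoc] at hs
      have hsb : |s - w₀.im| ≤ |w.im - w₀.im| := by
        rcases hs with ⟨h1, h2⟩ | ⟨h1, h2⟩ <;>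
          · rw [abs_le]
            constructor <;>
              linarith [neg_abs_le (w.im - w₀.im), le_abs_self (w.im - w₀.im),
                abs_nonneg (w.im - w₀.im)]
      have hdist : dist ((w.re : ℂ) + s * I) w₀ < σ := by
        rw [dist_eq_norm]
        have heq : (w.re : ℂ) + s * I - w₀ = ((w.re - w₀.re : ℝ) : ℂ) + ((s - w₀.im : ℝ) : ℂ) * I := by
          apply Complex.ext <;> simp
        rw [heq]
        calc ‖((w.re - w₀.re : ℝ) : ℂ) + ((s - w₀.im : ℝ) : ℂ) * I‖
            ≤ ‖((w.re - w₀.re : ℝ) : ℂ)‖ + ‖((s - w₀.im : ℝ) : ℂ) * I‖ := norm_add_le _ _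
          _ = |w.re - w₀.re| + |s - w₀.im| := by
              rw [norm_mul, Complex.norm_I, mul_one, Complex.norm_real, Complex.norm_real,
                Real.norm_eq_abs, Real.norm_eq_abs]
          _ ≤ ‖w - w₀‖ + |w.im - w₀.im| := by
              have := hsb; gcongr
          _ ≤ ‖w - w₀‖ + ‖w - w₀‖ := by linarith
          _ < σ := by linarith
      have := hσ hdist
      rw [dist_eq_norm] at this
      exact this.le
    calc ‖(∫ t in w₀.re..w.re, (f (t + w₀.im * I) - f w₀)) +
          I * ∫ s in w₀.im..w.im, (f (w.re + s * I) - f w₀)‖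
        ≤ ‖∫ t in w₀.re..w.re, (f (t + w₀.im * I) - f w₀)‖ +
          ‖I * ∫ s in w₀.im..w.im, (f (w.re + s * I) - f w₀)‖ := norm_add_le _ _
      _ = ‖∫ t in w₀.re..w.re, (f (t + w₀.im * I) - f w₀)‖ +
          ‖∫ s in w₀.im..w.im, (f (w.re + s * I) - f w₀)‖ := by
          rw [norm_mul, Complex.norm_I, one_mul]
      _ ≤ (c/2) * |w.re - w₀.re| + (c/2) * |w.im - w₀.im| := add_le_add hb1 hb2
      _ ≤ (c/2) * ‖w - w₀‖ + (c/2) * ‖w - w₀‖ := by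
          have h1 : (0:ℝ) ≤ c/2 := by linarith
          gcongr
      _ = c * ‖w - w₀‖ := by ring
  -- conclude
  have hFd : DifferentiableOn ℂ F (ball (0 : ℂ) r) := fun w hw =>
    ((key w hw).differentiableAt).differentiableWithinAt
  have hFa : AnalyticOnNhd ℂ F (ball (0 : ℂ) r) := hFd.analyticOnNhd isOpen_ball
  have hFa' : AnalyticOnNhd ℂ (deriv F) (ball (0 : ℂ) r) := hFa.deriv
  intro w hw
  have heq : f =ᶠ[nhds w] deriv F :=
    Filter.eventuallyEq_of_mem (isOpen_ball.mem_nhds hw) (fun u hu => ((key u hu).deriv).symm)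
  exact (heq.differentiableAt_iff.mpr (hFa' w hw).differentiableAt).differentiableWithinAt

/-- Let `h` be holomorphic on the unit disc, continuous on the closed disc, real on the
real diameter `[-1,1]`, with `h(ζ) = a ζ^k + o(ζ^k)` for a real `a ≠ 0` and `k ≥ 2`.
Then every function holomorphic on the upper half-disc, continuous up to the boundary,
real on `[-1,1]`, and sufficiently uniformly close to `h` on the closed upper half-disc,
has at least one zero in the closed upper half-disc. -/
theorem perturbation_has_zero_in_upper_half_disc
    (h : ℂ → ℂ) (a : ℝ) (k : ℕ) (hk : 2 ≤ k) (ha : a ≠ 0)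
    (hd : DifferentiableOn ℂ h (ball (0 : ℂ) 1))
    (hc : ContinuousOn h (closedBall (0 : ℂ) 1))
    (hreal : ∀ x : ℝ, -1 ≤ x → x ≤ 1 → (h (x : ℂ)).im = 0)
    (hasym : (fun ζ : ℂ => h ζ - (a : ℂ) * ζ ^ k) =o[nhds 0] fun ζ : ℂ => ζ ^ k) :
    ∃ δ : ℝ, 0 < δ ∧ δ < 1 ∧ ∃ ε : ℝ, 0 < ε ∧
      ∀ g : ℂ → ℂ,
        DifferentiableOn ℂ g {z : ℂ | ‖z‖ < 1 ∧ 0 < z.im} →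
        ContinuousOn g {z : ℂ | ‖z‖ ≤ 1 ∧ 0 ≤ z.im} →
        (∀ x : ℝ, -1 ≤ x → x ≤ 1 → (g (x : ℂ)).im = 0) →
        (∀ z : ℂ, ‖z‖ ≤ 1 → 0 ≤ z.im → ‖g z - h z‖ < ε) →
        ∃ z : ℂ, ‖z‖ ≤ δ ∧ 0 ≤ z.im ∧ g z = 0 := by
  classical
  have habs : (0 : ℝ) < |a| := abs_pos.mpr ha
  have hk0 : k ≠ 0 := by omega
  -- h 0 = 0
  have h0 : h 0 = 0 := by
    have h1 := (hasym.def (by norm_num : (0:ℝ) < 1)).self_of_nhds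
    rw [zero_pow hk0] at h1
    simp only [mul_zero, sub_zero, norm_zero, mul_zero] at h1
    exact norm_le_zero_iff.mp h1
  obtain ⟨σ, hσ0, hσ⟩ := Metric.eventually_nhds_iff.mp
    ((hasym.def (half_pos habs)).mono (fun ζ hζ => hζ))
  set δ : ℝ := min (σ / 2) (1 / 2) with hδ
  have hδ0 : 0 < δ := lt_min (by linarith) (by norm_num)
  have hδ1 : δ < 1 := lt_of_le_of_lt (min_le_right _ _) (by norm_num)
  have hδσ : δ < σ := lt_of_le_of_lt (min_le_left _ _) (by linarith)
  have hδk : (0 : ℝ) < δ ^ k := by positivity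
  refine ⟨δ, hδ0, hδ1, |a| * δ ^ k / 8, by positivity, ?_⟩
  intro g hg1 hg2 hg3 hg4
  by_contra hcon
  push_neg at hcon
  -- lower bound for h on the sphere of radius δ
  have hlow : ∀ u : ℂ, ‖u‖ = δ → |a| * δ ^ k / 2 ≤ ‖h u‖ := by
    intro u hu
    have hdu : dist u 0 < σ := by
      rw [dist_zero_right, hu]; exact hδσ
    have hb := hσ hdu
    have h1 : ‖(a : ℂ) * u ^ k‖ = |a| * δ ^ k := by
      rw [norm_mul, norm_pow, hu, Complex.norm_real, Real.norm_eq_abs]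
    have h2 : ‖u ^ k‖ = δ ^ k := by rw [norm_pow, hu]
    rw [h2] at hb
    have h3 : ‖(a : ℂ) * u ^ k‖ - ‖h u‖ ≤ ‖h u - (a : ℂ) * u ^ k‖ := by
      have := norm_sub_norm_le ((a : ℂ) * u ^ k) (h u)
      rw [norm_sub_rev] at this
      exact this
    rw [h1] at h3
    linarith
  -- the reflected function
  set G : ℂ → ℂ := fun z =>
    if z.im ≤ 0 then (starRingEnd ℂ) (g ((starRingEnd ℂ) z)) else g z with hG
  have hupper_open : IsOpen {z : ℂ | ‖z‖ < 1 ∧ 0 < z.im} :=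
    (isOpen_lt continuous_norm continuous_const).inter
      (isOpen_lt continuous_const Complex.continuous_im)
  -- continuity of G
  have hGc : ContinuousOn G (closedBall (0 : ℂ) δ) := by
    refine ContinuousOn.if ?_ ?_ ?_
    · intro z hz
      have him : z.im = 0 :=
        frontier_le_subset_eq Complex.continuous_im continuous_const hz.2
      have hznorm : ‖z‖ ≤ δ := mem_closedBall_zero_iff.mp hz.1
      have hzre : (z.re : ℂ) = z := Complex.ext (by simp) (by simp [him])
      have hbound : |z.re| ≤ 1 := by
        have := Complex.abs_re_le_norm z
        have : |z.re| ≤ δ := le_trans (Complex.abs_re_le_norm z) hznorm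
        linarith
      have hgim : (g z).im = 0 := by
        rw [← hzre]
        exact hg3 z.re (by linarith [abs_le.mp hbound]) (by linarith [abs_le.mp hbound])
      have hczz : (starRingEnd ℂ) z = z := Complex.conj_eq_iff_im.mpr him
      rw [hczz]
      exact Complex.conj_eq_iff_im.mpr hgim
    · have hclos : closure {z : ℂ | z.im ≤ 0} = {z : ℂ | z.im ≤ 0} :=
        (isClosed_le Complex.continuous_im continuous_const).closure_eq
      rw [hclos]
      refine Continuous.comp_continuousOn continuous_star ?_
      refine hg2.comp continuous_star.continuousOn ?_
      intro z hz
      rcases hz with ⟨hz1, hz2⟩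
      rw [mem_closedBall_zero_iff] at hz1
      constructor
      · rw [RCLike.norm_conj]; exact hz1.trans hδ1.le
      · simp only [Complex.conj_im]
        exact neg_nonneg.mpr hz2
    · have hset : {z : ℂ | ¬z.im ≤ 0} = {z : ℂ | 0 < z.im} := by
        ext z; simp [not_le]
      rw [hset]
      refine hg2.mono ?_
      intro z hz
      rcases hz with ⟨hz1, hz2⟩
      rw [mem_closedBall_zero_iff] at hz1
      exact ⟨hz1.trans hδ1.le,
        closure_lt_subset_le continuous_const Complex.continuous_im hz2⟩
  -- differentiability of G off the real axis
  have hGd : ∀ z : ℂ, ‖z‖ < δ → z.im ≠ 0 → DifferentiableAt ℂ G z := by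
    intro z hz him
    rcases him.lt_or_gt with hlt | hgt
    · have hmem : (starRingEnd ℂ) z ∈ {z : ℂ | ‖z‖ < 1 ∧ 0 < z.im} := by
        constructor
        · rw [RCLike.norm_conj]; exact hz.trans hδ1
        · simp only [Complex.conj_im]; linarith
      have hd1 : DifferentiableAt ℂ (fun w => (starRingEnd ℂ) (g ((starRingEnd ℂ) w))) z :=
        differentiableAt_conj_reflect (hg1.differentiableAt (hupper_open.mem_nhds hmem))
      refine hd1.congr_of_eventuallyEq ?_
      refine Filter.eventuallyEq_of_mem
        ((isOpen_lt Complex.continuous_im continuous_const).mem_nhds hlt) ?_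
      intro w hw
      exact if_pos (le_of_lt hw)
    · have hmem : z ∈ {z : ℂ | ‖z‖ < 1 ∧ 0 < z.im} := ⟨hz.trans hδ1, hgt⟩
      have hd1 : DifferentiableAt ℂ g z := hg1.differentiableAt (hupper_open.mem_nhds hmem)
      refine hd1.congr_of_eventuallyEq ?_
      refine Filter.eventuallyEq_of_mem
        ((isOpen_lt continuous_const Complex.continuous_im).mem_nhds hgt) ?_
      intro w hw
      exact if_neg (not_le.mpr hw)
  have hGdiff : DifferentiableOn ℂ G (ball (0 : ℂ) δ) :=
    differentiableOn_of_off_real hGc hGd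
  -- G has no zeros on the closed ball
  have hGne : ∀ z ∈ closedBall (0 : ℂ) δ, G z ≠ 0 := by
    intro z hz
    rw [mem_closedBall_zero_iff] at hz
    by_cases hzi : z.im ≤ 0
    · simp only [hG, if_pos hzi]
      intro h0'
      rw [map_eq_zero] at h0'
      exact hcon ((starRingEnd ℂ) z) (by rw [RCLike.norm_conj]; exact hz)
        (by simp only [Complex.conj_im]; linarith) h0'
    · simp only [hG, if_neg hzi]
      exact hcon z hz (le_of_lt (not_le.mp hzi))
  -- maximum principle for 1/G
  have hdc : DiffContOnCl ℂ (fun z => (G z)⁻¹) (ball (0 : ℂ) δ) := by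
    constructor
    · exact hGdiff.inv (fun z hz => hGne z (ball_subset_closedBall hz))
    · rw [closure_ball (0 : ℂ) (ne_of_gt hδ0)]
      exact hGc.inv₀ hGne
  have hMpos : (0 : ℝ) < |a| * δ ^ k / 4 := by positivity
  have hCbound : ∀ z ∈ frontier (ball (0 : ℂ) δ), ‖(G z)⁻¹‖ ≤ (|a| * δ ^ k / 4)⁻¹ := by
    intro z hz
    rw [frontier_ball (0 : ℂ) (ne_of_gt hδ0)] at hz
    have hzs : ‖z‖ = δ := mem_sphere_zero_iff_norm.mp hz
    have hGz : |a| * δ ^ k / 4 ≤ ‖G z‖ := by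
      have main : ∀ u : ℂ, ‖u‖ = δ → 0 ≤ u.im → |a| * δ ^ k / 4 ≤ ‖g u‖ := by
        intro u hu hui
        have h4 := hg4 u (hu.le.trans hδ1.le) hui
        have h5 := hlow u hu
        have h6 : ‖h u‖ - ‖g u‖ ≤ ‖g u - h u‖ := by
          have := norm_sub_norm_le (h u) (g u)
          rw [norm_sub_rev] at this
          exact this
        linarith
      by_cases hzi : z.im ≤ 0
      · have : G z = (starRingEnd ℂ) (g ((starRingEnd ℂ) z)) := if_pos hzi
        rw [this, RCLike.norm_conj]
        exact main ((starRingEnd ℂ) z) (by rw [RCLike.norm_conj]; exact hzs)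
          (by simp only [Complex.conj_im]; linarith)
      · have : G z = g z := if_neg hzi
        rw [this]
        exact main z hzs (le_of_lt (not_le.mp hzi))
    rw [norm_inv]
    exact inv_anti₀ hMpos hGz
  have hmax := Complex.norm_le_of_forall_mem_frontier_norm_le isBounded_ball hdc hCbound
    (z := 0) (by rw [closure_ball (0 : ℂ) (ne_of_gt hδ0)]; exact mem_closedBall_self hδ0.le)
  -- contradiction
  have hG0norm : ‖G 0‖ = ‖g 0‖ := by
    have : G 0 = (starRingEnd ℂ) (g ((starRingEnd ℂ) 0)) := if_pos (by norm_num)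
    rw [this, map_zero, RCLike.norm_conj]
  have hg0 : ‖g 0‖ < |a| * δ ^ k / 8 := by
    have := hg4 0 (by norm_num) (by norm_num)
    rwa [h0, sub_zero] at this
  have hG0pos : 0 < ‖G 0‖ := norm_pos_iff.mpr (hGne 0 (mem_closedBall_self hδ0.le))
  rw [norm_inv] at hmax
  have hfin : |a| * δ ^ k / 4 ≤ ‖G 0‖ := by
    rw [← inv_le_inv₀ hG0pos hMpos]
    exact hmax
  rw [hG0norm] at hfin
  linarith
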